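/- arXiv:1904.09880 — 2 statements merged into one kernel-verified Lean document; each statement's English description precedes it below -/
import Mathlib

section
/- Let F(s) = ∫₀ˢ (1 − t³)^{−1/2} dt for s ∈ [0,1] and π_{2,3} = 2F(1). For every x ∈ [π_{2,3}/4, π_{2,3}/2], if s, S ∈ [0,1] satisfy F(s) = x and F(S) = π_{2,3} − 2x, and c = (1 − s³)^{1/2}, then S = 4·s·c·(3 + c)³ / ((1 + c)·(8 + s³)²). -/
open MeasureTheory intervalIntegral Set

noncomputable def f23 (t : ℝ) : ℝ := (1 - t ^ 3) ^ (-(1/2) : ℝ)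
noncomputable def c23 (u : ℝ) : ℝ := Real.sqrt (1 - u ^ 3)
noncomputable def g23 (u : ℝ) : ℝ :=
  4 * u * c23 u * (3 + c23 u) ^ 3 / ((1 + c23 u) * (8 + u ^ 3) ^ 2)
noncomputable def Phi23 (s : ℝ) : ℝ := ∫ t in (0:ℝ)..s, f23 t
def P23 (c : ℝ) : ℝ := c ^ 4 + 24 * c ^ 3 + 18 * c ^ 2 - 27

lemma cube_lt_one {v : ℝ} (hv : v < 1) : v ^ 3 < 1 := by
  have hq : (0:ℝ) < 1 + v + v ^ 2 := by nlinarith [sq_nonneg (2*v+1)]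
  nlinarith [mul_pos (by linarith : (0:ℝ) < 1 - v) hq]

lemma c23_sq {u : ℝ} (hu : u ≤ 1) : c23 u ^ 2 = 1 - u ^ 3 := by
  rcases eq_or_lt_of_le hu with h | h
  · simp [c23, h]
  · have : (0:ℝ) ≤ 1 - u ^ 3 := by linarith [cube_lt_one h]
    simpa [c23] using Real.sq_sqrt this

lemma c23_nonneg (u : ℝ) : 0 ≤ c23 u := Real.sqrt_nonneg _

lemma c23_le_one {u : ℝ} (hu : 0 ≤ u) : c23 u ≤ 1 := by
  rw [c23, Real.sqrt_le_one]
  nlinarith [mul_nonneg (mul_nonneg hu hu) hu]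

lemma c23_pos {u : ℝ} (hu1 : u < 1) : 0 < c23 u :=
  Real.sqrt_pos.mpr (by linarith [cube_lt_one hu1])

lemma c23_anti {a b : ℝ} (ha : 0 ≤ a) (hab : a < b) (hb : b ≤ 1) : c23 b < c23 a := by
  apply Real.sqrt_lt_sqrt
  · rcases eq_or_lt_of_le hb with h | h
    · rw [h]; norm_num
    · linarith [cube_lt_one h]
  · have := pow_lt_pow_left₀ hab ha (n := 3) (by norm_num)
    linarith

lemma P23_mono {a b : ℝ} (ha : 0 ≤ a) (hab : a < b) : P23 a < P23 b := by
  have hb : 0 ≤ b := ha.trans hab.le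
  have h4 : a ^ 4 ≤ b ^ 4 := pow_le_pow_left₀ ha hab.le 4
  have h3 : a ^ 3 < b ^ 3 := pow_lt_pow_left₀ hab ha (by norm_num)
  have h2 : a ^ 2 ≤ b ^ 2 := pow_le_pow_left₀ ha hab.le 2
  simp only [P23]; linarith

lemma continuousOn_f23 : ContinuousOn f23 (Iio 1) := by
  intro v hv
  simp only [mem_Iio] at hv
  have h := cube_lt_one hv
  have : ContinuousWithinAt (fun t : ℝ => (1 - t ^ 3) ^ (-(1/2) : ℝ)) (Iio 1) v :=
    ContinuousWithinAt.rpow_const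
      ((continuous_const.sub (continuous_pow 3)).continuousWithinAt)
      (Or.inl (by intro hcon; nlinarith))
  exact this

lemma integrableOn_f23 : IntegrableOn f23 (Icc 0 1) volume := by
  have hg : IntervalIntegrable (fun t : ℝ => (1 - t) ^ (-(1/2) : ℝ)) volume 0 1 := by
    have h := (intervalIntegrable_rpow' (a := 0) (b := 1) (r := -(1/2)) (by norm_num)).comp_sub_left 1
    simpa using h.symm
  have hgI : IntegrableOn (fun t : ℝ => (1 - t) ^ (-(1/2) : ℝ)) (Icc 0 1) volume := by
    rw [integrableOn_Icc_iff_integrableOn_Ioc]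
    simpa [intervalIntegrable_iff_integrableOn_Ioc_of_le] using hg
  apply hgI.integrable.mono
  · have h1 : AEStronglyMeasurable f23 (volume.restrict (Ico 0 1)) :=
      (continuousOn_f23.mono (Ico_subset_Iio_self)).aestronglyMeasurable measurableSet_Ico
    rwa [Measure.restrict_congr_set Ico_ae_eq_Icc] at h1
  · rw [ae_restrict_iff' measurableSet_Icc]
    filter_upwards with t ht
    have h0 : (0:ℝ) ≤ 1 - t := by linarith [ht.2]
    have h1 : (0:ℝ) ≤ 1 - t ^ 3 := by
      rcases eq_or_lt_of_le ht.2 with h | h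
      · subst h; norm_num
      · linarith [cube_lt_one h]
    simp only [f23, Real.norm_eq_abs]
    rw [abs_of_nonneg (Real.rpow_nonneg h1 _), abs_of_nonneg (Real.rpow_nonneg h0 _)]
    rcases eq_or_lt_of_le ht.2 with h | h
    · subst h; norm_num
    · refine Real.rpow_le_rpow_of_nonpos (by linarith) ?_ (by norm_num)
      nlinarith [mul_nonneg (mul_nonneg ht.1 (by linarith : (0:ℝ) ≤ 1 - t))
        (by linarith [ht.1] : (0:ℝ) ≤ 1 + t)]

lemma intInt_f23 {a b : ℝ} (ha : a ∈ Icc (0:ℝ) 1) (hb : b ∈ Icc (0:ℝ) 1) :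
    IntervalIntegrable f23 volume a b :=
  (integrableOn_f23.mono_set (uIcc_subset_Icc ha hb)).intervalIntegrable

lemma continuousOn_Phi23 : ContinuousOn Phi23 (Icc 0 1) := by
  have := continuousOn_primitive_interval (a := (0:ℝ)) (b := (1:ℝ)) (μ := volume) (f := f23)
    (by simpa [uIcc_of_le (by norm_num : (0:ℝ) ≤ 1)] using integrableOn_f23)
  exact (by simpa [uIcc_of_le (by norm_num : (0:ℝ) ≤ 1)] using this :
    ContinuousOn (fun x => ∫ t in (0:ℝ)..x, f23 t) (Icc 0 1))

lemma f23_pos {t : ℝ} (h1 : t < 1) : 0 < f23 t :=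
  Real.rpow_pos_of_pos (by linarith [cube_lt_one h1]) _

lemma strictMonoOn_Phi23 : StrictMonoOn Phi23 (Icc 0 1) := by
  intro a ha b hb hab
  have h1 : Phi23 a + ∫ t in a..b, f23 t = Phi23 b :=
    integral_add_adjacent_intervals (intInt_f23 (by simp) ha) (intInt_f23 ha hb)
  have h2 : 0 < ∫ t in a..b, f23 t := by
    apply intervalIntegral_pos_of_pos_on (intInt_f23 ha hb) _ hab
    intro t ht
    exact f23_pos (lt_of_lt_of_le ht.2 hb.2)
  simp only [Phi23] at h1 ⊢
  linarith

lemma hasDerivAt_Phi23 {u : ℝ} (hu : u ∈ Ioo (0:ℝ) 1) : HasDerivAt Phi23 (f23 u) u :=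
  integral_hasDerivAt_right (intInt_f23 (by simp) ⟨hu.1.le, hu.2.le⟩)
    (continuousOn_f23.stronglyMeasurableAtFilter isOpen_Iio u hu.2)
    ((continuousOn_f23 u hu.2).continuousAt (Iio_mem_nhds hu.2))

lemma Phi23_zero : Phi23 0 = 0 := integral_same

lemma alg1 (u c : ℝ) (hc2 : c ^ 2 = 1 - u ^ 3) (h1 : 0 ≤ c) (h2 : c ≤ 1) :
    1 - (4 * u * c * (3 + c) ^ 3 / ((1 + c) * (8 + u ^ 3) ^ 2)) ^ 3
      = (P23 c) ^ 2 / ((1 + c) ^ 2 * (3 - c) ^ 6) := by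
  have hu3 : u ^ 3 = 1 - c ^ 2 := by linear_combination hc2
  have h8 : (8:ℝ) + u ^ 3 = (3 - c) * (3 + c) := by linear_combination hc2
  have hp1 : (0:ℝ) < 1 + c := by linarith
  have hp3 : (0:ℝ) < 3 - c := by linarith
  have hp3' : (0:ℝ) < 3 + c := by linarith
  have hD : ((1 + c) * ((3 - c) * (3 + c)) ^ 2) ≠ 0 :=
    (mul_pos hp1 (pow_pos (mul_pos hp3 hp3') 2)).ne'
  have hA : ((1 + c) ^ 2 * (3 - c) ^ 6 : ℝ) ≠ 0 :=
    (mul_pos (pow_pos hp1 2) (pow_pos hp3 6)).ne'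
  rw [h8, div_pow, one_sub_div (pow_ne_zero 3 hD), div_eq_div_iff (pow_ne_zero 3 hD) hA, P23]
  linear_combination (-64 * c^3 * (3+c)^9 * (1+c)^2 * (3-c)^6) * hu3

lemma g23_cube {u : ℝ} (hu : u ∈ Icc (0:ℝ) 1) :
    1 - g23 u ^ 3 = (P23 (c23 u)) ^ 2 / ((1 + c23 u) ^ 2 * (3 - c23 u) ^ 6) :=
  alg1 u (c23 u) (c23_sq hu.2) (c23_nonneg u) (c23_le_one hu.1)

lemma g23_nonneg {u : ℝ} (hu : 0 ≤ u) : 0 ≤ g23 u := by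
  apply div_nonneg
  · have := c23_nonneg u
    positivity
  · have := c23_nonneg u
    positivity

lemma g23_le_one {u : ℝ} (hu : u ∈ Icc (0:ℝ) 1) : g23 u ≤ 1 := by
  have h := g23_cube hu
  have hc0 := c23_nonneg u
  have hc1 := c23_le_one hu.1
  have hnn : 0 ≤ 1 - g23 u ^ 3 := by
    rw [h]
    have h1 : (0:ℝ) < 1 + c23 u := by linarith
    have h3 : (0:ℝ) < 3 - c23 u := by linarith
    positivity
  by_contra hgt
  push_neg at hgt
  have hg0 := g23_nonneg hu.1
  have hq : (0:ℝ) < g23 u ^ 2 + g23 u + 1 := by positivity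
  nlinarith [mul_pos (by linarith : (0:ℝ) < g23 u - 1) hq]

lemma g23_mem {u : ℝ} (hu : u ∈ Icc (0:ℝ) 1) : g23 u ∈ Icc (0:ℝ) 1 :=
  ⟨g23_nonneg hu.1, g23_le_one hu⟩

lemma g23_zero : g23 0 = 0 := by norm_num [g23]

lemma g23_one : g23 1 = 0 := by norm_num [g23, c23]

lemma continuous_c23 : Continuous c23 :=
  Real.continuous_sqrt.comp (continuous_const.sub (continuous_pow 3))

lemma continuousOn_g23 : ContinuousOn g23 (Icc 0 1) := by
  apply ContinuousOn.div
  · exact (((continuous_const.mul continuous_id).mul continuous_c23).mul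
      ((continuous_const.add continuous_c23).pow 3)).continuousOn
  · exact ((continuous_const.add continuous_c23).mul
      ((continuous_const.add (continuous_pow 3)).pow 2)).continuousOn
  · intro u hu
    have hc0 := c23_nonneg u
    have h8 : (0:ℝ) < 8 + u ^ 3 := by nlinarith [pow_nonneg hu.1 3]
    have h1 : (0:ℝ) < 1 + c23 u := by linarith
    positivity

lemma hasDerivAt_g23 {u : ℝ} (hu : u ∈ Ioo (0:ℝ) 1) :
    HasDerivAt g23 (2 * P23 (c23 u) / (c23 u * (1 + c23 u) * (3 - c23 u) ^ 3)) u := by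
  have hcube := cube_lt_one hu.2
  have hne : (1 - u ^ 3) ≠ 0 := by linarith
  have hc2 : c23 u ^ 2 = 1 - u ^ 3 := c23_sq hu.2.le
  have hcpos : 0 < c23 u := c23_pos hu.2
  have hcle : c23 u ≤ 1 := c23_le_one hu.1.le
  have hinner : HasDerivAt (fun y : ℝ => 1 - y ^ 3) (-(3 * u ^ 2)) u := by
    simpa using (hasDerivAt_pow 3 u).const_sub 1
  have hder_c : HasDerivAt c23 (-(3 * u ^ 2) / (2 * c23 u)) u := by
    exact hinner.sqrt hne
  have hA : HasDerivAt (fun y : ℝ => 4 * y) 4 u := by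
    simpa using (hasDerivAt_id u).const_mul (4:ℝ)
  have hAB := hA.mul hder_c
  have hC := (hder_c.const_add 3).pow 3
  have hnum := hAB.mul hC
  have hD1 := hder_c.const_add 1
  have hD2 := ((hasDerivAt_pow 3 u).const_add 8).pow 2
  have hden := hD1.mul hD2
  have hdenne : (1 + c23 u) * (8 + u ^ 3) ^ 2 ≠ 0 := by
    have : (0:ℝ) < 8 + u ^ 3 := by nlinarith [hu.1.le]
    positivity
  have hg := hnum.div hden hdenne
  convert hg using 1
  case e'_4 => rfl
  case e'_5 => rfl
  case e'_8 => rfl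
  simp only [Pi.mul_apply, Pi.pow_apply]
  set c := c23 u
  have h1 : (0:ℝ) < 1 + c := by linarith
  have h3 : (0:ℝ) < 3 - c := by linarith
  have h8 : (0:ℝ) < 8 + u ^ 3 := by nlinarith [hu.1.le]
  push_cast
  field_simp
  simp only [P23]
  linear_combination (55296 + 6048*u ^ 3 - 108*u ^ 6 + 55296*c + 6048*c*u ^ 3 - 108*c*u ^ 6 +
    65088*c ^ 2 + 4824*c ^ 2*u ^ 3 + 72*c ^ 2*u ^ 6 + 15936*c ^ 3 - 552*c ^ 3*u ^ 3 +
    168*c ^ 3*u ^ 6 - 1664*c ^ 4 + 1456*c ^ 4*u ^ 3 + 100*c ^ 4*u ^ 6 - 1664*c ^ 5 +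
    688*c ^ 5*u ^ 3 + 4*c ^ 5*u ^ 6 + 64*c ^ 6 - 40*c ^ 6*u ^ 3 + 64*c ^ 7 - 40*c ^ 7*u ^ 3) * hc2

lemma rpow_sq_neg_half {a : ℝ} (ha : 0 < a) : ((a ^ 2 : ℝ)) ^ (-(1/2) : ℝ) = a⁻¹ := by
  rw [← Real.rpow_natCast a 2, ← Real.rpow_mul ha.le]
  norm_num [Real.rpow_neg_one]
/-- Theorem 1 (second half): double-angle formula for sin_{2,3} on [π_{2,3}/4, π_{2,3}/2]. -/
theorem sin23_double_angle_second_half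
    (F : ℝ → ℝ) (hF : ∀ s, F s = ∫ t in (0:ℝ)..s, (1 - t ^ 3) ^ (-(1/2) : ℝ))
    (pi23 : ℝ) (hpi : pi23 = 2 * F 1)
    (x : ℝ) (hx : x ∈ Set.Icc (pi23 / 4) (pi23 / 2))
    (s S : ℝ) (hs : s ∈ Set.Icc (0:ℝ) 1) (hS : S ∈ Set.Icc (0:ℝ) 1)
    (hFs : F s = x) (hFS : F S = pi23 - 2 * x)
    (c : ℝ) (hc : c = (1 - s ^ 3) ^ ((1:ℝ)/2)) :
    S = 4 * s * c * (3 + c) ^ 3 / ((1 + c) * (8 + s ^ 3) ^ 2) := by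
  have hΦ : ∀ y, F y = Phi23 y := hF
  have hcc : c = c23 s := by rw [hc, c23, Real.sqrt_eq_rpow]
  have hgmem : g23 s ∈ Icc (0:ℝ) 1 := g23_mem hs
  have h1mem : (1:ℝ) ∈ Icc (0:ℝ) 1 := by norm_num
  have hxs : x = Phi23 s := by rw [← hFs, hΦ]
  have hpi' : pi23 = 2 * Phi23 1 := by rw [hpi, hΦ]
  have hSx : Phi23 S = pi23 - 2 * x := by rw [← hΦ, hFS]
  have key : Phi23 S = Phi23 (g23 s) := by
    rcases le_or_gt (P23 (c23 s)) 0 with hP | hP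
    · -- second-half regime
      have hsub : Icc s 1 ⊆ Icc (0:ℝ) 1 := Icc_subset_Icc hs.1 le_rfl
      have hmaps : MapsTo g23 (Icc s 1) (Icc (0:ℝ) 1) :=
        fun u hu => g23_mem ⟨hs.1.trans hu.1, hu.2⟩
      have hHcont : ContinuousOn (fun u => Phi23 (g23 u) + 2 * Phi23 u) (Icc s 1) :=
        (continuousOn_Phi23.comp (continuousOn_g23.mono hsub) hmaps).add
          (continuousOn_const.mul (continuousOn_Phi23.mono hsub))
      have hder : ∀ u ∈ Ioo s 1, HasDerivAt (fun u => Phi23 (g23 u) + 2 * Phi23 u) 0 u := by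
        intro u hu
        have hu01 : u ∈ Ioo (0:ℝ) 1 := ⟨lt_of_le_of_lt hs.1 hu.1, hu.2⟩
        have humem : u ∈ Icc (0:ℝ) 1 := ⟨hu01.1.le, hu01.2.le⟩
        have hcpos : 0 < c23 u := c23_pos hu01.2
        have hcle := c23_le_one hu01.1.le
        have h1c : (0:ℝ) < 1 + c23 u := by linarith
        have h3c : (0:ℝ) < 3 - c23 u := by linarith
        have hPu : P23 (c23 u) < 0 :=
          lt_of_lt_of_le (P23_mono (c23_nonneg u) (c23_anti hs.1 hu.1 hu.2.le)) hP
        have hgpos : 0 < g23 u := by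
          apply div_pos
          · have hu0 := hu01.1; positivity
          · have h8 : (0:ℝ) < 8 + u ^ 3 := by nlinarith [pow_nonneg hu01.1.le 3]
            positivity
        have hglt : g23 u < 1 := by
          have hcube : 0 < 1 - g23 u ^ 3 := by
            rw [g23_cube humem]
            have hPne : P23 (c23 u) ≠ 0 := hPu.ne
            positivity
          by_contra hgt
          push_neg at hgt
          nlinarith [mul_nonneg (by linarith : (0:ℝ) ≤ g23 u - 1)
            (by positivity : (0:ℝ) ≤ g23 u ^ 2 + g23 u + 1)]
        have hfu : f23 u = (c23 u)⁻¹ := by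
          simp only [f23]
          rw [← c23_sq hu01.2.le, rpow_sq_neg_half hcpos]
        have hQpos : 0 < -P23 (c23 u) / ((1 + c23 u) * (3 - c23 u) ^ 3) :=
          div_pos (neg_pos.2 hPu) (by positivity)
        have hfg : f23 (g23 u) = ((1 + c23 u) * (3 - c23 u) ^ 3) / (-P23 (c23 u)) := by
          have hsq : 1 - g23 u ^ 3
              = (-P23 (c23 u) / ((1 + c23 u) * (3 - c23 u) ^ 3)) ^ 2 := by
            rw [g23_cube humem, div_pow, neg_sq]
            congr 1
            ring
          simp only [f23]
          rw [hsq, rpow_sq_neg_half hQpos, inv_div]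
        have hΦg := hasDerivAt_Phi23 (⟨hgpos, hglt⟩ : g23 u ∈ Ioo (0:ℝ) 1)
        have hgd := hasDerivAt_g23 hu01
        have hsum := (hΦg.comp u hgd).add
          (HasDerivAt.const_mul (2:ℝ) (hasDerivAt_Phi23 hu01))
        have hval : f23 (g23 u) * (2 * P23 (c23 u) / (c23 u * (1 + c23 u) * (3 - c23 u) ^ 3))
            + 2 * f23 u = 0 := by
          rw [hfg, hfu]
          have hPne : P23 (c23 u) ≠ 0 := hPu.ne
          field_simp
          ring
        rw [hval] at hsum
        exact hsum
      have hdiff : DifferentiableOn ℝ (fun u => Phi23 (g23 u) + 2 * Phi23 u)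
          (interior (Icc s 1)) := by
        rw [interior_Icc]
        exact fun u hu => (hder u hu).differentiableAt.differentiableWithinAt
      have hd0 : ∀ u ∈ interior (Icc s 1),
          deriv (fun u => Phi23 (g23 u) + 2 * Phi23 u) u = 0 := by
        rw [interior_Icc]
        exact fun u hu => (hder u hu).deriv
      have hmono := monotoneOn_of_deriv_nonneg (convex_Icc s 1) hHcont hdiff
        (fun u hu => (hd0 u hu).ge)
      have hanti := antitoneOn_of_deriv_nonpos (convex_Icc s 1) hHcont hdiff
        (fun u hu => (hd0 u hu).le)
      have hs1 : s ∈ Icc s 1 := ⟨le_rfl, hs.2⟩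
      have h11 : (1:ℝ) ∈ Icc s 1 := ⟨hs.2, le_rfl⟩
      have hH := le_antisymm (hmono hs1 h11 hs.2) (hanti hs1 h11 hs.2)
      simp only [g23_one, Phi23_zero, zero_add] at hH
      rw [hSx, hxs, hpi']
      linarith [hH]
    · -- first-half regime forces x = pi23/4
      have hsub : Icc (0:ℝ) s ⊆ Icc (0:ℝ) 1 := Icc_subset_Icc le_rfl hs.2
      have hmaps : MapsTo g23 (Icc (0:ℝ) s) (Icc (0:ℝ) 1) :=
        fun u hu => g23_mem ⟨hu.1, hu.2.trans hs.2⟩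
      have hHcont : ContinuousOn (fun u => Phi23 (g23 u) - 2 * Phi23 u) (Icc (0:ℝ) s) :=
        (continuousOn_Phi23.comp (continuousOn_g23.mono hsub) hmaps).sub
          (continuousOn_const.mul (continuousOn_Phi23.mono hsub))
      have hder : ∀ u ∈ Ioo (0:ℝ) s, HasDerivAt (fun u => Phi23 (g23 u) - 2 * Phi23 u) 0 u := by
        intro u hu
        have hu01 : u ∈ Ioo (0:ℝ) 1 := ⟨hu.1, lt_of_lt_of_le hu.2 hs.2⟩
        have humem : u ∈ Icc (0:ℝ) 1 := ⟨hu01.1.le, hu01.2.le⟩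
        have hcpos : 0 < c23 u := c23_pos hu01.2
        have hcle := c23_le_one hu01.1.le
        have h1c : (0:ℝ) < 1 + c23 u := by linarith
        have h3c : (0:ℝ) < 3 - c23 u := by linarith
        have hPu : 0 < P23 (c23 u) :=
          lt_trans hP (P23_mono (c23_nonneg s) (c23_anti hu.1.le hu.2 hs.2))
        have hgpos : 0 < g23 u := by
          apply div_pos
          · have hu0 := hu01.1; positivity
          · have h8 : (0:ℝ) < 8 + u ^ 3 := by nlinarith [pow_nonneg hu01.1.le 3]
            positivity
        have hglt : g23 u < 1 := by
          have hcube : 0 < 1 - g23 u ^ 3 := by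
            rw [g23_cube humem]
            have hPne : P23 (c23 u) ≠ 0 := hPu.ne'
            positivity
          by_contra hgt
          push_neg at hgt
          nlinarith [mul_nonneg (by linarith : (0:ℝ) ≤ g23 u - 1)
            (by positivity : (0:ℝ) ≤ g23 u ^ 2 + g23 u + 1)]
        have hfu : f23 u = (c23 u)⁻¹ := by
          simp only [f23]
          rw [← c23_sq hu01.2.le, rpow_sq_neg_half hcpos]
        have hQpos : 0 < P23 (c23 u) / ((1 + c23 u) * (3 - c23 u) ^ 3) :=
          div_pos hPu (by positivity)
        have hfg : f23 (g23 u) = ((1 + c23 u) * (3 - c23 u) ^ 3) / (P23 (c23 u)) := by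
          have hsq : 1 - g23 u ^ 3
              = (P23 (c23 u) / ((1 + c23 u) * (3 - c23 u) ^ 3)) ^ 2 := by
            rw [g23_cube humem, div_pow]
            congr 1
            ring
          simp only [f23]
          rw [hsq, rpow_sq_neg_half hQpos, inv_div]
        have hΦg := hasDerivAt_Phi23 (⟨hgpos, hglt⟩ : g23 u ∈ Ioo (0:ℝ) 1)
        have hgd := hasDerivAt_g23 hu01
        have hsum := (hΦg.comp u hgd).sub
          (HasDerivAt.const_mul (2:ℝ) (hasDerivAt_Phi23 hu01))
        have hval : f23 (g23 u) * (2 * P23 (c23 u) / (c23 u * (1 + c23 u) * (3 - c23 u) ^ 3))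
            - 2 * f23 u = 0 := by
          rw [hfg, hfu]
          have hPne : P23 (c23 u) ≠ 0 := hPu.ne'
          field_simp
          ring
        rw [hval] at hsum
        exact hsum
      have hdiff : DifferentiableOn ℝ (fun u => Phi23 (g23 u) - 2 * Phi23 u)
          (interior (Icc (0:ℝ) s)) := by
        rw [interior_Icc]
        exact fun u hu => (hder u hu).differentiableAt.differentiableWithinAt
      have hd0 : ∀ u ∈ interior (Icc (0:ℝ) s),
          deriv (fun u => Phi23 (g23 u) - 2 * Phi23 u) u = 0 := by
        rw [interior_Icc]
        exact fun u hu => (hder u hu).deriv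
      have hmono := monotoneOn_of_deriv_nonneg (convex_Icc (0:ℝ) s) hHcont hdiff
        (fun u hu => (hd0 u hu).ge)
      have hanti := antitoneOn_of_deriv_nonpos (convex_Icc (0:ℝ) s) hHcont hdiff
        (fun u hu => (hd0 u hu).le)
      have hs0 : (0:ℝ) ∈ Icc (0:ℝ) s := ⟨le_rfl, hs.1⟩
      have hss : s ∈ Icc (0:ℝ) s := ⟨hs.1, le_rfl⟩
      have hK := le_antisymm (hanti hs0 hss hs.1) (hmono hs0 hss hs.1)
      simp only [g23_zero, Phi23_zero, mul_zero, sub_zero] at hK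
      -- hK : Phi23 (g23 s) - 2 * Phi23 s = 0
      have hle : Phi23 (g23 s) ≤ Phi23 1 :=
        strictMonoOn_Phi23.monotoneOn hgmem h1mem (g23_le_one hs)
      have hx1 : pi23 / 4 ≤ x := hx.1
      rw [hSx, hxs, hpi'] at *
      linarith [hK, hle, hx1]
  have hSg : S = g23 s := strictMonoOn_Phi23.injOn hS hgmem key
  rw [hcc]
  exact hSg
end

section
/- Let F(s) = ∫₀ˢ (1 − t²)^{−3/4} dt for s ∈ [0,1] and π_{4/3,2} = 2F(1). For every x ∈ [π_{4/3,2}/4, π_{4/3,2}/2], if s, S ∈ [0,1] satisfy F(s) = x and F(S) = π_{4/3,2} − 2x, and c = (1 − s²)^{3/4}, then S = 4·s·c^{1/3}·(1 + c^{4/3}) / (2c^{2/3} + s²)². -/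
open Set intervalIntegral MeasureTheory Real

noncomputable def f432 : ℝ → ℝ := fun t => (1 - t ^ 2) ^ (-(3/4) : ℝ)

noncomputable def phi432 : ℝ → ℝ := fun t =>
  4 * t * (1 - t ^ 2) ^ ((1:ℝ)/4) * (2 - t ^ 2) / (2 * (1 - t ^ 2) ^ ((1:ℝ)/2) + t ^ 2) ^ 2

lemma f432_contOn : ContinuousOn f432 (Set.Ioo (-1:ℝ) 1) := by
  apply ContinuousOn.rpow_const
  · fun_prop
  · rintro x ⟨h1, h2⟩
    left
    nlinarith

lemma f432_pos {t : ℝ} (h1 : -1 < t) (h2 : t < 1) : 0 < f432 t := by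
  apply Real.rpow_pos_of_pos
  nlinarith

lemma f432_int01 : IntervalIntegrable f432 volume 0 1 := by
  have h1 : IntervalIntegrable (fun x : ℝ => x ^ (-(3/4) : ℝ)) volume 0 1 :=
    intervalIntegral.intervalIntegrable_rpow' (by norm_num)
  have h2 : IntervalIntegrable (fun x : ℝ => (1 - x) ^ (-(3/4) : ℝ)) volume 0 1 := by
    simpa using (h1.comp_sub_left 1).symm
  have h3 : IntervalIntegrable
      (fun x : ℝ => (1 - x) ^ (-(3/4) : ℝ) * (1 + x) ^ (-(3/4) : ℝ)) volume 0 1 := by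
    apply h2.mul_continuousOn
    apply ContinuousOn.rpow_const (by fun_prop)
    intro x hx
    rw [Set.uIcc_of_le (zero_le_one)] at hx
    left; nlinarith [hx.1, hx.2]
  rw [intervalIntegrable_iff_integrableOn_Ioc_of_le zero_le_one] at h3 ⊢
  apply h3.congr_fun ?_ measurableSet_Ioc
  intro t ht
  simp only [f432]
  rw [show (1:ℝ) - t ^ 2 = (1 - t) * (1 + t) by ring,
    Real.mul_rpow (by nlinarith [ht.1, ht.2]) (by nlinarith [ht.1, ht.2])]

lemma f432_int {a b : ℝ} (ha : a ∈ Set.Icc (0:ℝ) 1) (hb : b ∈ Set.Icc (0:ℝ) 1) :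
    IntervalIntegrable f432 volume a b := by
  apply f432_int01.mono_set
  rw [Set.uIcc_subset_uIcc_iff_mem]
  constructor
  · simpa [Set.uIcc_of_le (zero_le_one)] using ha
  · simpa [Set.uIcc_of_le (zero_le_one)] using hb

lemma F432_hasDeriv {y : ℝ} (h0 : -1 < y) (h1 : y < 1) :
    HasDerivAt (fun u => ∫ t in (0:ℝ)..u, f432 t) (f432 y) y := by
  apply intervalIntegral.integral_hasDerivAt_right
  · apply (f432_contOn.mono ?_).intervalIntegrable
    intro x hx
    rcases Set.mem_uIcc.1 hx with ⟨hx1, hx2⟩ | ⟨hx1, hx2⟩ <;> constructor <;> nlinarith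
  · exact f432_contOn.stronglyMeasurableAtFilter isOpen_Ioo y ⟨h0, h1⟩
  · exact f432_contOn.continuousAt (isOpen_Ioo.mem_nhds ⟨h0, h1⟩)


lemma r4_eq {y : ℝ} (hy : 0 ≤ y) : (y ^ ((1:ℝ)/4)) ^ 4 = y := by
  rw [← Real.rpow_natCast (y ^ ((1:ℝ)/4)) 4, ← Real.rpow_mul hy]; norm_num

lemma half_eq {y : ℝ} (hy : 0 ≤ y) : y ^ ((1:ℝ)/2) = (y ^ ((1:ℝ)/4)) ^ 2 := by
  rw [← Real.rpow_natCast (y ^ ((1:ℝ)/4)) 2, ← Real.rpow_mul hy]; norm_num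

lemma f432_eq {t : ℝ} (h : 0 < 1 - t ^ 2) :
    f432 t = 1 / ((1 - t ^ 2) ^ ((1:ℝ)/4)) ^ 3 := by
  rw [← Real.rpow_natCast ((1 - t ^ 2) ^ ((1:ℝ)/4)) 3, ← Real.rpow_mul h.le]
  simp only [f432]
  rw [Real.rpow_neg h.le, one_div]
  norm_num

lemma den_pos {t r : ℝ} (ht1 : t ≤ 1) (hr : 0 ≤ r) (hr4 : r ^ 4 = 1 - t ^ 2) :
    0 < t ^ 2 + 2 * r ^ 2 := by
  nlinarith [sq_nonneg (r ^ 2 - 1), sq_nonneg r, sq_nonneg t]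

lemma phi432_sq {t : ℝ} (ht0 : 0 ≤ t) (ht1 : t ≤ 1) :
    1 - phi432 t ^ 2 =
      ((t ^ 2 - 2 * ((1 - t ^ 2) ^ ((1:ℝ)/4)) ^ 2) /
        (t ^ 2 + 2 * ((1 - t ^ 2) ^ ((1:ℝ)/4)) ^ 2)) ^ 4 := by
  set r := (1 - t ^ 2) ^ ((1:ℝ)/4) with hrdef
  have hy : (0:ℝ) ≤ 1 - t ^ 2 := by nlinarith
  have hr : 0 ≤ r := Real.rpow_nonneg hy _
  have hr4 : r ^ 4 = 1 - t ^ 2 := r4_eq hy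
  have hden : 0 < t ^ 2 + 2 * r ^ 2 := den_pos ht1 hr hr4
  have hphi : phi432 t = 4 * t * r * (2 - t ^ 2) / (2 * r ^ 2 + t ^ 2) ^ 2 := by
    simp only [phi432, half_eq hy, ← hrdef]
  rw [hphi]
  have hden' : (0:ℝ) < 2 * r ^ 2 + t ^ 2 := by linarith
  have h2 : (2 * r ^ 2 + t ^ 2) ^ 2 ≠ 0 := (pow_pos hden' 2).ne' 
  field_simp
  rw [show r ^ 2 * 2 + t ^ 2 = t ^ 2 + r ^ 2 * 2 by ring, eq_div_iff (pow_pos (by linarith) 4).ne',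
    sub_mul, div_mul_cancel₀ _ (pow_pos (by linarith) 4).ne']
  linear_combination (64 * t ^ 2 * r ^ 2) * hr4

lemma phi432_nonneg {t : ℝ} (ht0 : 0 ≤ t) (ht1 : t ≤ 1) : 0 ≤ phi432 t := by
  have hy : (0:ℝ) ≤ 1 - t ^ 2 := by nlinarith
  apply div_nonneg _ (by positivity)
  have h := Real.rpow_nonneg hy ((1:ℝ)/4)
  apply mul_nonneg (mul_nonneg (by positivity) h)
  nlinarith

lemma phi432_le_one {t : ℝ} (ht0 : 0 ≤ t) (ht1 : t ≤ 1) : phi432 t ≤ 1 := by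
  have h := phi432_sq ht0 ht1
  have h2 : 0 ≤ ((t ^ 2 - 2 * ((1 - t ^ 2) ^ ((1:ℝ)/4)) ^ 2) /
        (t ^ 2 + 2 * ((1 - t ^ 2) ^ ((1:ℝ)/4)) ^ 2)) ^ 4 := by positivity
  nlinarith [phi432_nonneg ht0 ht1]


lemma phi432_hasDeriv {t : ℝ} (ht0 : 0 < t) (ht1 : t < 1) :
    HasDerivAt phi432
      (-2 * (t ^ 2 - 2 * ((1 - t ^ 2) ^ ((1:ℝ)/4)) ^ 2) ^ 3 /
        (((1 - t ^ 2) ^ ((1:ℝ)/4)) ^ 3 * (t ^ 2 + 2 * ((1 - t ^ 2) ^ ((1:ℝ)/4)) ^ 2) ^ 3)) t := by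
  have hy : (0:ℝ) < 1 - t ^ 2 := by nlinarith
  set r := (1 - t ^ 2) ^ ((1:ℝ)/4) with hrdef
  have hrpos : 0 < r := Real.rpow_pos_of_pos hy _
  have hr4 : r ^ 4 = 1 - t ^ 2 := r4_eq hy.le
  have hden : 0 < t ^ 2 + 2 * r ^ 2 := by positivity
  have hinner : HasDerivAt (fun x : ℝ => 1 - x ^ 2) (-(2 * t)) t := by
    simpa using ((hasDerivAt_pow 2 t).const_sub 1)
  have h34 : (1 - t ^ 2) ^ ((1:ℝ)/4 - 1) = 1 / r ^ 3 := by
    have h := f432_eq hy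
    simp only [f432] at h
    rw [show (1:ℝ)/4 - 1 = -(3/4) by norm_num]
    exact h
  have h12 : (1 - t ^ 2) ^ ((1:ℝ)/2 - 1) = 1 / r ^ 2 := by
    rw [show (1:ℝ)/2 - 1 = -((1:ℝ)/2) by norm_num, Real.rpow_neg hy.le, half_eq hy.le,
      ← hrdef, one_div]
  have hA : HasDerivAt (fun x : ℝ => (1 - x ^ 2) ^ ((1:ℝ)/4)) (-t / (2 * r ^ 3)) t := by
    have houter := Real.hasDerivAt_rpow_const (x := 1 - t ^ 2) (p := (1:ℝ)/4) (Or.inl hy.ne')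
    have hcomp := houter.comp t hinner
    refine hcomp.congr_deriv (Eq.symm ?_)
    rw [h34]
    field_simp
    ring
  have hB : HasDerivAt (fun x : ℝ => (1 - x ^ 2) ^ ((1:ℝ)/2)) (-t / r ^ 2) t := by
    have houter := Real.hasDerivAt_rpow_const (x := 1 - t ^ 2) (p := (1:ℝ)/2) (Or.inl hy.ne')
    have hcomp := houter.comp t hinner
    refine hcomp.congr_deriv (Eq.symm ?_)
    rw [h12]
    field_simp
  have hc1 : HasDerivAt (fun x : ℝ => 4 * x) 4 t := by
    simpa using (hasDerivAt_id t).const_mul 4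
  have hinner2 : HasDerivAt (fun x : ℝ => 2 - x ^ 2) (-(2 * t)) t := by
    simpa using ((hasDerivAt_pow 2 t).const_sub 2)
  have hsq : HasDerivAt (fun x : ℝ => x ^ 2) (2 * t) t := by
    simpa using hasDerivAt_pow 2 t
  have hN := (hc1.mul hA).mul hinner2
  have hC := ((hB.const_mul 2).add hsq)
  have hD := hC.pow 2
  have hDne : (2 * (1 - t ^ 2) ^ ((1:ℝ)/2) + t ^ 2) ^ 2 ≠ 0 := by
    rw [half_eq hy.le, ← hrdef]
    positivity
  have hdiv := hN.div hD hDne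
  have heq : phi432 = fun x : ℝ =>
      4 * x * (1 - x ^ 2) ^ ((1:ℝ)/4) * (2 - x ^ 2) /
        (2 * (1 - x ^ 2) ^ ((1:ℝ)/2) + x ^ 2) ^ 2 := rfl
  rw [heq]
  refine hdiv.congr_deriv (Eq.symm ?_)
  simp only [Pi.mul_apply, Pi.add_apply, Pi.pow_apply]
  rw [half_eq hy.le, ← hrdef]
  have hkey : (0:ℝ) < 2 * r ^ 2 + t ^ 2 := by positivity
  field_simp
  ring_nf
  linear_combination (768*t^2*r^10 + 1408*t^4*r^8 + 896*t^6*r^6 + 192*t^8*r^4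
    - 16*t^10*r^2 - 8*t^12) * hr4


lemma phi432_one : phi432 1 = 0 := by
  simp only [phi432]
  norm_num

lemma phi432_s0 : phi432 (Real.sqrt (2 * Real.sqrt 2 - 2)) = 1 := by
  set a := Real.sqrt 2 with hadef
  have ha2 : a ^ 2 = 2 := Real.sq_sqrt (by norm_num)
  have ha0 : 0 ≤ a := Real.sqrt_nonneg 2
  have ha1 : 1 < a := by nlinarith
  have ha32 : a < 3/2 := by nlinarith
  set s₀ : ℝ := Real.sqrt (2 * a - 2) with hs₀def
  have hs0nn : 0 ≤ s₀ := Real.sqrt_nonneg _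
  have hs0sq : s₀ ^ 2 = 2 * a - 2 := Real.sq_sqrt (by nlinarith)
  have hy0 : (0:ℝ) ≤ 1 - s₀ ^ 2 := by nlinarith
  set q : ℝ := (1 - s₀ ^ 2) ^ ((1:ℝ)/4) with hqdef
  have hq0 : 0 ≤ q := Real.rpow_nonneg hy0 _
  have hq4 : q ^ 4 = 1 - s₀ ^ 2 := r4_eq hy0
  have hq2 : q ^ 2 = a - 1 := by
    have h1 : (q ^ 2) ^ 2 = (a - 1) ^ 2 := by
      rw [show (q ^ 2) ^ 2 = q ^ 4 by ring, hq4, hs0sq]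
      linear_combination (-1 : ℝ) * ha2
    exact (pow_left_inj₀ (by positivity) (by linarith) (by norm_num)).1 h1
  have hsq0q : s₀ * q = 2 - a := by
    apply (pow_left_inj₀ (by positivity) (by linarith) (n := 2) (by norm_num)).1
    rw [mul_pow, hs0sq, hq2]
    linear_combination (1 : ℝ) * ha2
  have hhalf : (1 - s₀ ^ 2) ^ ((1:ℝ)/2) = q ^ 2 := half_eq hy0
  have hne : ((2:ℝ) * q ^ 2 + s₀ ^ 2) ^ 2 ≠ 0 := by
    rw [hq2, hs0sq]
    exact (pow_pos (by linarith) 2).ne' 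
  simp only [phi432]
  rw [hhalf, div_eq_one_iff_eq hne, show (4:ℝ) * s₀ * q * (2 - s₀ ^ 2)
    = 4 * (s₀ * q) * (2 - s₀ ^ 2) by ring, hsq0q, hq2, hs0sq]
  linear_combination (-8 : ℝ) * ha2

set_option maxHeartbeats 2000000 in
/-- Theorem 2 (second half): double-angle formula for sin_{4/3,2} on [π_{4/3,2}/4, π_{4/3,2}/2]. -/
theorem sin432_double_angle_second_half
    (F : ℝ → ℝ) (hF : ∀ s, F s = ∫ t in (0:ℝ)..s, (1 - t ^ 2) ^ (-(3/4) : ℝ))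
    (pi432 : ℝ) (hpi : pi432 = 2 * F 1)
    (x : ℝ) (hx : x ∈ Set.Icc (pi432 / 4) (pi432 / 2))
    (s S : ℝ) (hs : s ∈ Set.Icc (0:ℝ) 1) (hS : S ∈ Set.Icc (0:ℝ) 1)
    (hFs : F s = x) (hFS : F S = pi432 - 2 * x)
    (c : ℝ) (hc : c = (1 - s ^ 2) ^ ((3:ℝ)/4)) :
    S = 4 * s * c ^ ((1:ℝ)/3) * (1 + c ^ ((4:ℝ)/3)) / (2 * c ^ ((2:ℝ)/3) + s ^ 2) ^ 2 := by
  have hFf : ∀ u, F u = ∫ t in (0:ℝ)..u, f432 t := fun u => hF u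
  have hFfun : F = fun u => ∫ t in (0:ℝ)..u, f432 t := funext hFf
  have hFd : ∀ y : ℝ, -1 < y → y < 1 → HasDerivAt F (f432 y) y := by
    intro y h0 h1
    rw [hFfun]
    exact F432_hasDeriv h0 h1
  have hF0 : F 0 = 0 := by rw [hFf]; simp
  have hmono : StrictMonoOn F (Set.Icc 0 1) := by
    intro a ha b hb hab
    have h0mem : (0:ℝ) ∈ Set.Icc (0:ℝ) 1 := by constructor <;> norm_num
    have h1 := intervalIntegral.integral_add_adjacent_intervals
      (μ := volume) (f432_int h0mem ha) (f432_int ha hb)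
    have hpos : 0 < ∫ t in a..b, f432 t := by
      apply intervalIntegral.intervalIntegral_pos_of_pos_on (f432_int ha hb) _ hab
      intro y hy
      exact f432_pos (by linarith [ha.1, hy.1]) (by linarith [hb.2, hy.2])
    rw [hFf a, hFf b]
    linarith [h1]
  have hFcont : ContinuousOn F (Set.Icc 0 1) := by
    rw [hFfun]
    have hint : IntegrableOn f432 (Set.uIcc (0:ℝ) 1) volume := by
      rw [Set.uIcc_of_le zero_le_one, integrableOn_Icc_iff_integrableOn_Ioc]
      have h := f432_int01
      rwa [intervalIntegrable_iff_integrableOn_Ioc_of_le zero_le_one] at h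
    have := intervalIntegral.continuousOn_primitive_interval (a := (0:ℝ)) (b := 1) hint
    simpa [Set.uIcc_of_le zero_le_one] using this
  -- s₀
  have ha2 : Real.sqrt 2 ^ 2 = 2 := Real.sq_sqrt (by norm_num)
  have ha0 : (0:ℝ) ≤ Real.sqrt 2 := Real.sqrt_nonneg 2
  have ha1 : 1 < Real.sqrt 2 := by nlinarith
  have ha32 : Real.sqrt 2 < 3/2 := by nlinarith
  set s₀ : ℝ := Real.sqrt (2 * Real.sqrt 2 - 2) with hs₀def
  have hs0nn : 0 ≤ s₀ := Real.sqrt_nonneg _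
  have hs0sq : s₀ ^ 2 = 2 * Real.sqrt 2 - 2 := Real.sq_sqrt (by nlinarith)
  have hs0pos : 0 < s₀ := Real.sqrt_pos.2 (by nlinarith)
  have hs0lt1 : s₀ < 1 := by nlinarith
  have hs0mem : s₀ ∈ Set.Icc (0:ℝ) 1 := ⟨hs0nn, hs0lt1.le⟩
  have hphis0 : phi432 s₀ = 1 := phi432_s0
  -- derivative of G := F ∘ φ + 2F vanishes on (s₀, 1)
  have key : ∀ t ∈ Set.Ioo s₀ 1, HasDerivAt (fun u => F (phi432 u) + 2 * F u) 0 t := by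
    intro t ht
    obtain ⟨hts0, ht1⟩ := ht
    have ht0 : 0 < t := hs0pos.trans hts0
    have hy : (0:ℝ) < 1 - t ^ 2 := by nlinarith
    set r : ℝ := (1 - t ^ 2) ^ ((1:ℝ)/4) with hrdef
    have hrpos : 0 < r := Real.rpow_pos_of_pos hy _
    have hr4 : r ^ 4 = 1 - t ^ 2 := r4_eq hy.le
    have hgt : 2 * r ^ 2 < t ^ 2 := by
      by_contra hcon
      push_neg at hcon
      have h1 : t ^ 4 ≤ 4 * (1 - t ^ 2) := by nlinarith [sq_nonneg r, sq_nonneg t]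
      have h2 : s₀ < t := hts0
      nlinarith [sq_nonneg (t ^ 2 + 2 - 2 * Real.sqrt 2), mul_pos hs0pos ht0]
    have hden : (0:ℝ) < t ^ 2 + 2 * r ^ 2 := by positivity
    have hphisq := phi432_sq ht0.le ht1.le
    have hwpos : (0:ℝ) < (t ^ 2 - 2 * r ^ 2) / (t ^ 2 + 2 * r ^ 2) :=
      div_pos (by linarith) hden
    have hphnn : 0 ≤ phi432 t := phi432_nonneg ht0.le ht1.le
    have hphilt : phi432 t < 1 := by
      have h4 : 0 < ((t ^ 2 - 2 * r ^ 2) / (t ^ 2 + 2 * r ^ 2)) ^ 4 := by positivity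
      have h5 : phi432 t ^ 2 < 1 := by
        rw [← hrdef] at hphisq
        linarith [hphisq, h4]
      nlinarith [h5, hphnn, sq_nonneg (phi432 t - 1)]
    have hfphi : f432 (phi432 t) = ((t ^ 2 + 2 * r ^ 2) / (t ^ 2 - 2 * r ^ 2)) ^ 3 := by
      simp only [f432]
      rw [hphisq, ← Real.rpow_natCast ((t ^ 2 - 2 * r ^ 2) / (t ^ 2 + 2 * r ^ 2)) 4,
        ← Real.rpow_mul hwpos.le]
      rw [show ((4:ℕ):ℝ) * (-(3/4)) = -(3:ℝ) by norm_num]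
      rw [Real.rpow_neg hwpos.le, show (3:ℝ) = ((3:ℕ):ℝ) by norm_num,
        Real.rpow_natCast, ← inv_pow, inv_div]
    have hcomp := (hFd (phi432 t) (by linarith) hphilt).comp t (phi432_hasDeriv ht0 ht1)
    have hsum := hcomp.add ((hFd t (by linarith) ht1).const_mul 2)
    have hzero : f432 (phi432 t) *
        (-2 * (t ^ 2 - 2 * ((1 - t ^ 2) ^ ((1:ℝ)/4)) ^ 2) ^ 3 /
          (((1 - t ^ 2) ^ ((1:ℝ)/4)) ^ 3 * (t ^ 2 + 2 * ((1 - t ^ 2) ^ ((1:ℝ)/4)) ^ 2) ^ 3))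
        + 2 * f432 t = 0 := by
      rw [hfphi, f432_eq hy, ← hrdef]
      have h5 : t ^ 2 - 2 * r ^ 2 ≠ 0 := by linarith
      field_simp
      ring
    exact hzero ▸ hsum
  -- continuity of G on [s₀, 1]
  have hphicont : ContinuousOn phi432 (Set.Icc s₀ 1) := by
    have hnum : Continuous fun t : ℝ => 4 * t * (1 - t ^ 2) ^ ((1:ℝ)/4) * (2 - t ^ 2) := by
      apply Continuous.mul _ (by fun_prop)
      apply Continuous.mul (by fun_prop)
      exact Continuous.rpow_const (by fun_prop) (fun x => Or.inr (by norm_num))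
    have hden : Continuous fun t : ℝ => (2 * (1 - t ^ 2) ^ ((1:ℝ)/2) + t ^ 2) ^ 2 := by
      apply Continuous.pow
      apply Continuous.add _ (by fun_prop)
      apply Continuous.mul continuous_const
      exact Continuous.rpow_const (by fun_prop) (fun x => Or.inr (by norm_num))
    apply ContinuousOn.div hnum.continuousOn hden.continuousOn
    intro t ht
    have h1 : 0 < t := lt_of_lt_of_le hs0pos ht.1
    have h2 : (0:ℝ) ≤ (1 - t ^ 2) ^ ((1:ℝ)/2) := Real.rpow_nonneg (by nlinarith [ht.2]) _
    exact (pow_pos (by nlinarith) 2).ne'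
  have hmaps : Set.MapsTo phi432 (Set.Icc s₀ 1) (Set.Icc 0 1) := fun t ht =>
    ⟨phi432_nonneg (le_trans hs0nn ht.1) ht.2, phi432_le_one (le_trans hs0nn ht.1) ht.2⟩
  have hGcont : ContinuousOn (fun u => F (phi432 u) + 2 * F u) (Set.Icc s₀ 1) := by
    apply ContinuousOn.add
    · exact hFcont.comp hphicont hmaps
    · exact continuousOn_const.mul (hFcont.mono (Set.Icc_subset_Icc hs0nn le_rfl))
  have hphi1 : phi432 1 = 0 := phi432_one
  have hconst : ∀ t ∈ Set.Ioc s₀ 1, F (phi432 t) + 2 * F t = 2 * F 1 := by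
    intro t ht
    obtain ⟨hts0, ht1⟩ := ht
    rcases eq_or_lt_of_le ht1 with heq | hlt
    · rw [heq, hphi1, hF0]; ring
    · have hc1 : ContinuousOn (fun u => F (phi432 u) + 2 * F u) (Set.Icc t 1) :=
        hGcont.mono (Set.Icc_subset_Icc hts0.le le_rfl)
      have hd1 : ∀ y ∈ Set.Ico t 1,
          HasDerivWithinAt (fun u => F (phi432 u) + 2 * F u) 0 (Set.Ici y) y :=
        fun y hy => (key y ⟨lt_of_lt_of_le hts0 hy.1, hy.2⟩).hasDerivWithinAt
      have hcc := constant_of_has_deriv_right_zero hc1 hd1 1 (Set.right_mem_Icc.2 hlt.le)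
      rw [hphi1, hF0] at hcc
      linarith [hcc]
  have hGs0 : F (phi432 s₀) + 2 * F s₀ = 2 * F 1 := by
    have hcw : ContinuousWithinAt (fun u => F (phi432 u) + 2 * F u) (Set.Ioc s₀ 1) s₀ :=
      (hGcont s₀ ⟨le_refl _, hs0lt1.le⟩).mono Set.Ioc_subset_Icc_self
    haveI hne : (nhdsWithin s₀ (Set.Ioc s₀ 1)).NeBot := by
      apply mem_closure_iff_nhdsWithin_neBot.1
      rw [closure_Ioc hs0lt1.ne]
      exact ⟨le_refl _, hs0lt1.le⟩
    refine tendsto_nhds_unique hcw ?_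
    apply Filter.Tendsto.congr' _ tendsto_const_nhds
    filter_upwards [self_mem_nhdsWithin] with y hy
    exact (hconst y hy).symm
  have hFs0val : F s₀ = F 1 / 2 := by
    rw [hphis0] at hGs0; linarith
  have hxval : F 1 / 2 ≤ x := by
    have h := hx.1
    rw [hpi] at h
    linarith
  have hss0 : s₀ ≤ s := by
    by_contra hcon
    push_neg at hcon
    have := hmono hs hs0mem hcon
    rw [hFs, hFs0val] at this
    linarith
  have hGs : F (phi432 s) + 2 * F s = 2 * F 1 := by
    rcases eq_or_lt_of_le hss0 with heq | hlt
    · rw [← heq]; exact hGs0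
    · exact hconst s ⟨hlt, hs.2⟩
  have hFeqS : F (phi432 s) = F S := by
    rw [hFS, hpi, ← hFs]
    linarith
  have hphis : phi432 s = S :=
    hmono.injOn ⟨phi432_nonneg hs.1 hs.2, phi432_le_one hs.1 hs.2⟩ hS hFeqS
  rw [← hphis]
  have hy0 : (0:ℝ) ≤ 1 - s ^ 2 := by nlinarith [hs.1, hs.2]
  have h13 : c ^ ((1:ℝ)/3) = (1 - s ^ 2) ^ ((1:ℝ)/4) := by
    rw [hc, ← Real.rpow_mul hy0]
    norm_num
  have h43 : c ^ ((4:ℝ)/3) = 1 - s ^ 2 := by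
    rw [hc, ← Real.rpow_mul hy0]
    norm_num [Real.rpow_one]
  have h23 : c ^ ((2:ℝ)/3) = (1 - s ^ 2) ^ ((1:ℝ)/2) := by
    rw [hc, ← Real.rpow_mul hy0]
    norm_num
  rw [h13, h43, h23]
  simp only [phi432]
  ring
end
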